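/- (Lemma 1) Let Γ be a finite nonempty set, Δ : Γ → Γ → ℤ a matrix with det Δ ≠ 0, ∂Γ ⊆ Γ and Γ° = Γ \ ∂Γ. Suppose the sandpile group G(Γ) = ℤ^Γ/Δ(ℤ^Γ) is generated by the classes of the delta functions δ_v for v ∈ ∂Γ (i.e. it is generated by adding sand at the boundary). Then the extended sandpile group G̃(Γ) := (ℤ^{Γ°} × ℝ^{∂Γ}) / Δ̃(ℤ^Γ), where Δ̃(f) = ((Δf)|_{Γ°}, (Δf)|_{∂Γ} viewed as real-valued), is isomorphic as an abelian group to the quotient H_ℝ(Γ)/H_ℤ(Γ) of real-valued harmonic functions by the image of the integer-valued harmonic functions. -/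

import Mathlib

open scoped BigOperators

/-- The homomorphism `Δ ⊗ A : A^Γ → A^Γ` induced by an integer matrix `Δ`. -/
def lapHom {Γ : Type} [Fintype Γ] (Δ : Matrix Γ Γ ℤ) (A : Type) [AddCommGroup A] :
    (Γ → A) →+ (Γ → A) where
  toFun f v := ∑ w, Δ v w • f w
  map_zero' := by funext v; simp
  map_add' f g := by funext v; simp [smul_add, Finset.sum_add_distrib]

/-- `Δ° ⊗ A : A^Γ → A^{Γ°}`: the Laplacian followed by restriction to the
interior `Γ° = Γ \ ∂Γ` (here `B` is the boundary `∂Γ`). -/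
def lapIntHom {Γ : Type} [Fintype Γ] (Δ : Matrix Γ Γ ℤ) (B : Set Γ)
    (A : Type) [AddCommGroup A] : (Γ → A) →+ ({v : Γ // v ∉ B} → A) where
  toFun f v := ∑ w, Δ v.1 w • f w
  map_zero' := by funext v; simp
  map_add' f g := by funext v; simp [smul_add, Finset.sum_add_distrib]

/-- `Δ̃ : ℤ^Γ → ℤ^{Γ°} × ℝ^{∂Γ}`. -/
def extLap {Γ : Type} [Fintype Γ] (Δ : Matrix Γ Γ ℤ) (B : Set Γ) :
    (Γ → ℤ) →+ (({v : Γ // v ∉ B} → ℤ) × ({v : Γ // v ∈ B} → ℝ)) where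
  toFun f := (fun v => ∑ w, Δ v.1 w * f w, fun v => ∑ w, (Δ v.1 w : ℝ) * (f w : ℝ))
  map_zero' := by refine Prod.ext ?_ ?_ <;> funext v <;> simp
  map_add' f g := by
    refine Prod.ext ?_ ?_ <;> funext v <;> simp [mul_add, Finset.sum_add_distrib]

/-- The inclusion `ℤ^Γ → ℝ^Γ`. -/
def intCastHom (Γ : Type) : (Γ → ℤ) →+ (Γ → ℝ) where
  toFun f v := (f v : ℝ)
  map_zero' := by funext v; simp
  map_add' f g := by funext v; simp

/-!
A real harmonic function `f` is determined by its boundary Laplacian `(Δf)|∂Γ`, since `Δ` is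
invertible over `ℝ`; this gives a homomorphism `H_ℝ(Γ) → G̃(Γ)`, `f ↦ [(0, (Δf)|∂Γ)]`.
It is surjective: restriction to `Γ°` kills every boundary `δ_v`, so the generation hypothesis
forces `Δ°` to be onto over `ℤ`; hence the interior part of any class can be cancelled by some
`Δ̃ g`, and the remaining boundary part is `(Δf)|∂Γ` for a real harmonic `f`. Its kernel consists
of the `f` with `Δ̃ g = (0, (Δf)|∂Γ)` for some integer `g`; then `Δg = Δf` everywhere, so `f = g`
is an integer harmonic function.
-/

open Function QuotientAddGroup

section Laplacian

variable {Γ : Type} [Fintype Γ] (Δ : Matrix Γ Γ ℤ)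

lemma lapHom_apply_eq_mulVec (K : Type) [Ring K] (f : Γ → K) :
    lapHom Δ K f = (Δ.map (Int.cast : ℤ → K)).mulVec f := by
  ext v
  simp [lapHom, Matrix.mulVec, dotProduct, zsmul_eq_mul]

lemma lapHom_bijective [DecidableEq Γ] (K : Type) [Field K] [CharZero K] (hΔ : Δ.det ≠ 0) :
    Bijective (lapHom Δ K) := by
  have hunit : IsUnit (Δ.map (Int.cast : ℤ → K)) := by
    have hdet : (Δ.map (Int.cast : ℤ → K)).det = Δ.det := ((Int.castRingHom K).map_det Δ).symm
    rw [Matrix.isUnit_iff_isUnit_det, hdet]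
    exact (Int.cast_ne_zero.2 hΔ).isUnit
  rw [funext (lapHom_apply_eq_mulVec Δ K)]
  exact ⟨Matrix.mulVec_injective_iff_isUnit.2 hunit, Matrix.mulVec_surjective_iff_isUnit.2 hunit⟩

lemma lapHom_comp_apply {A A' : Type} [AddCommGroup A] [AddCommGroup A'] (φ : A →+ A')
    (f : Γ → A) : lapHom Δ A' (φ ∘ f) = φ ∘ lapHom Δ A f := by
  ext v
  simp [lapHom, map_sum, map_zsmul]

lemma lapHom_intCastHom (g : Γ → ℤ) :
    lapHom Δ ℝ (intCastHom Γ g) = intCastHom Γ (lapHom Δ ℤ g) :=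
  lapHom_comp_apply Δ (Int.castAddHom ℝ) g

variable (B : Set Γ)

lemma mem_ker_lapIntHom {A : Type} [AddCommGroup A] {f : Γ → A} :
    f ∈ (lapIntHom Δ B A).ker ↔ ∀ v ∉ B, lapHom Δ A f v = 0 := by
  simp only [AddMonoidHom.mem_ker, funext_iff, Subtype.forall]
  rfl

lemma extLap_apply (g : Γ → ℤ) :
    extLap Δ B g = (lapIntHom Δ B ℤ g, fun v => lapHom Δ ℝ (intCastHom Γ g) v.1) := by
  ext v <;> simp [extLap, lapIntHom, lapHom, intCastHom]

end Laplacian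

lemma range_comp_eq_top_of_closure_eq_top {K G H : Type} [AddCommGroup K] [AddCommGroup G]
    [AddCommGroup H] (L : K →+ G) {r : G →+ H} (hr : Surjective r) {T : Set (G ⧸ L.range)}
    (hT : AddSubgroup.closure T = ⊤) (hTr : ∀ x ∈ T, ∃ s ∈ r.ker, x = mk s) :
    (r.comp L).range = ⊤ := by
  let q := QuotientAddGroup.map L.range (r.comp L).range r fun _ ⟨k, hk⟩ => ⟨k, by simp [hk]⟩
  have hq : q.ker = ⊤ := by
    rw [eq_top_iff, ← hT, AddSubgroup.closure_le]
    rintro _ hx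
    obtain ⟨s, hs, rfl⟩ := hTr _ hx
    simp [q, AddMonoidHom.mem_ker.1 hs]
  rw [eq_top_iff]
  intro h _
  obtain ⟨g, rfl⟩ := hr h
  have : q (mk g) = 0 := AddMonoidHom.mem_ker.1 (hq ▸ AddSubgroup.mem_top _)
  exact (eq_zero_iff _).1 this

section Sandpile

variable {Γ : Type} [Fintype Γ] (Δ : Matrix Γ Γ ℤ) (B : Set Γ)

noncomputable def harmonicToExtSandpile :
    (lapIntHom Δ B ℝ).ker →+ ((({v : Γ // v ∉ B} → ℤ) × ({v : Γ // v ∈ B} → ℝ)) ⧸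
      (extLap Δ B).range) :=
  (mk' _).comp <| (AddMonoidHom.inr _ _).comp <|
    (LinearMap.funLeft ℤ ℝ (Subtype.val : {v : Γ // v ∈ B} → Γ)).toAddMonoidHom.comp <|
      (lapHom Δ ℝ).comp (lapIntHom Δ B ℝ).ker.subtype

lemma harmonicToExtSandpile_apply (f : (lapIntHom Δ B ℝ).ker) :
    harmonicToExtSandpile Δ B f = mk (0, fun v => lapHom Δ ℝ f v.1) :=
  rfl

variable [DecidableEq Γ]

lemma lapIntHom_int_surjective
    (hgen : AddSubgroup.closure
      {x : (Γ → ℤ) ⧸ (lapHom Δ ℤ).range |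
        ∃ v ∈ B, x = QuotientAddGroup.mk (Pi.single v (1 : ℤ))} = ⊤) :
    Surjective (lapIntHom Δ B ℤ) := by
  let r := (LinearMap.funLeft ℤ ℤ (Subtype.val : {v : Γ // v ∉ B} → Γ)).toAddMonoidHom
  have hr : Surjective r := Subtype.val_injective.surjective_comp_right
  have hrange := range_comp_eq_top_of_closure_eq_top (lapHom Δ ℤ) hr hgen <| by
    rintro _ ⟨v, hv, rfl⟩
    refine ⟨_, AddMonoidHom.mem_ker.2 ?_, rfl⟩
    ext ⟨w, hw⟩
    exact Pi.single_eq_of_ne (ne_of_mem_of_not_mem hv hw).symm 1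
  exact AddMonoidHom.range_eq_top.1 hrange

lemma extLap_eq_iff (hΔ : Δ.det ≠ 0) (g : Γ → ℤ) (f : (lapIntHom Δ B ℝ).ker) :
    extLap Δ B g = (0, fun v => lapHom Δ ℝ f v.1) ↔
      g ∈ (lapIntHom Δ B ℤ).ker ∧ intCastHom Γ g = f := by
  have hf := (mem_ker_lapIntHom Δ B).1 f.2
  rw [extLap_apply, Prod.mk.injEq, ← AddMonoidHom.mem_ker, mem_ker_lapIntHom,
    ← (lapHom_bijective Δ ℝ hΔ).injective.eq_iff, funext_iff, funext_iff, Subtype.forall]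
  constructor
  · rintro ⟨hg, hbdry⟩
    refine ⟨hg, fun v => ?_⟩
    by_cases hv : v ∈ B
    · exact hbdry v hv
    · rw [lapHom_intCastHom, hf v hv]
      simp [intCastHom, hg v hv]
  · rintro ⟨hg, heq⟩
    exact ⟨hg, fun v _ => heq v⟩

lemma harmonicToExtSandpile_surjective (hΔ : Δ.det ≠ 0)
    (hgen : AddSubgroup.closure
      {x : (Γ → ℤ) ⧸ (lapHom Δ ℤ).range |
        ∃ v ∈ B, x = QuotientAddGroup.mk (Pi.single v (1 : ℤ))} = ⊤) :
    Surjective (harmonicToExtSandpile Δ B) := by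
  classical
  intro x
  obtain ⟨⟨a, b⟩, rfl⟩ := mk_surjective x
  obtain ⟨g, hg⟩ := lapIntHom_int_surjective Δ B hgen a
  let c : Γ → ℝ := fun v =>
    if hv : v ∈ B then b ⟨v, hv⟩ - lapHom Δ ℝ (intCastHom Γ g) v else 0
  obtain ⟨f, hf⟩ := (lapHom_bijective Δ ℝ hΔ).surjective c
  have hfH : f ∈ (lapIntHom Δ B ℝ).ker :=
    (mem_ker_lapIntHom Δ B).2 fun v hv => by simp [hf, c, hv]
  refine ⟨⟨f, hfH⟩, ?_⟩
  rw [harmonicToExtSandpile_apply, ← sub_eq_zero, ← mk_sub, eq_zero_iff]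
  refine ⟨-g, ?_⟩
  rw [map_neg, extLap_apply, hg]
  ext v
  · simp
  · simp [hf, c]

lemma ker_harmonicToExtSandpile (hΔ : Δ.det ≠ 0) :
    (harmonicToExtSandpile Δ B).ker =
      ((intCastHom Γ).comp (lapIntHom Δ B ℤ).ker.subtype).range.addSubgroupOf
        (lapIntHom Δ B ℝ).ker := by
  ext f
  simp only [AddMonoidHom.mem_ker, harmonicToExtSandpile_apply, eq_zero_iff,
    AddSubgroup.mem_addSubgroupOf, AddMonoidHom.mem_range, extLap_eq_iff Δ B hΔ]
  constructor
  · rintro ⟨g, hg, hgf⟩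
    exact ⟨⟨g, hg⟩, hgf⟩
  · rintro ⟨g, hgf⟩
    exact ⟨g, g.2, hgf⟩

end Sandpile

theorem extended_sandpile_iso_harmonic_quotient
    (Γ : Type) [Fintype Γ] [DecidableEq Γ]
    (Δ : Matrix Γ Γ ℤ) (B : Set Γ) (hΔ : Δ.det ≠ 0)
    (hgen : AddSubgroup.closure
      {x : (Γ → ℤ) ⧸ (lapHom Δ ℤ).range |
        ∃ v ∈ B, x = QuotientAddGroup.mk (Pi.single v (1 : ℤ))} = ⊤) :
    Nonempty (((({v : Γ // v ∉ B} → ℤ) × ({v : Γ // v ∈ B} → ℝ)) ⧸ (extLap Δ B).range)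
      ≃+ ((lapIntHom Δ B ℝ).ker ⧸
        (((intCastHom Γ).comp (lapIntHom Δ B ℤ).ker.subtype).range.addSubgroupOf
          (lapIntHom Δ B ℝ).ker))) :=
  ⟨(quotientKerEquivOfSurjective _ (harmonicToExtSandpile_surjective Δ B hΔ hgen)).symm.trans
    (quotientAddEquivOfEq (ker_harmonicToExtSandpile Δ B hΔ))⟩
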